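/- arXiv:1809.00967 — 2 statements merged into one kernel-verified Lean document; each statement's English description precedes it below -/
import Mathlib

section
/- Let A, B be maximal monotone operators on a real Hilbert space X, let λ > 0, and let (y_n, a_n, x_n, b_n) be sequences generated by the Douglas–Rachford method from initial points x₀, b₀ ∈ X. If there exists z ∈ X with 0 ∈ A(z) + B(z), then there exists (z*, w*) ∈ S_e(A,B) such that y_n ⇀ z* and −a_n ⇀ w* weakly in X as n → ∞. -/
/-!
The Douglas–Rachford method is the fixed-point iteration of `s n = x n + lam • b n` (`drIterate`),
`x n` being the resolvent of `lam • B` at `s n`. For every extended solution `(z, w)`, with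
`σ = z + lam • w`, monotonicity of `A` and `B` gives
`‖s (n+1) - σ‖² + ‖s n - s (n+1)‖² ≤ ‖s n - σ‖²`. Hence `‖s n - σ‖` converges,
`s n - s (n+1) → 0`, `(x, b)` is bounded, and `y n - x n → 0`, `a n + b n → 0`.
Maximal monotonicity makes the pair `(A, B)` demiclosed, so every weak cluster point of
`(x n, b n)` is an extended solution; Opial's argument shows that the points
`xc + lam • bc` of two cluster points coincide, and monotonicity of `B` makes
`(xc, bc) ↦ xc + lam • bc` injective. So `(x n, b n)` converges weakly, and `(y n, -a n)` has
the same weak limit.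
-/

open Filter Topology

/-- A set-valued operator `T` on `X` (identified with its graph) is monotone. -/
def IsMonotoneOp {X : Type*} [NormedAddCommGroup X] [InnerProductSpace ℝ X]
    (T : Set (X × X)) : Prop :=
  ∀ p ∈ T, ∀ q ∈ T, (0 : ℝ) ≤ inner ℝ (p.1 - q.1) (p.2 - q.2)

/-- `T` is maximal monotone: monotone and maximal w.r.t. inclusion among monotone operators. -/
def IsMaxMonotone {X : Type*} [NormedAddCommGroup X] [InnerProductSpace ℝ X]
    (T : Set (X × X)) : Prop :=
  IsMonotoneOp T ∧ ∀ S : Set (X × X), IsMonotoneOp S → T ⊆ S → S = T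

/-- Weak convergence of a sequence in an inner product space. -/
def WeakConv {X : Type*} [NormedAddCommGroup X] [InnerProductSpace ℝ X]
    (u : ℕ → X) (l : X) : Prop :=
  ∀ v : X, Tendsto (fun n => (inner ℝ (u n) v : ℝ)) atTop (𝓝 (inner ℝ l v))

/-- The extended solution set `S_e(A,B) = {(z,w) : w ∈ B(z), -w ∈ A(z)}`. -/
def Se {X : Type*} [NormedAddCommGroup X] [InnerProductSpace ℝ X]
    (A B : Set (X × X)) : Set (X × X) :=
  {p | (p.1, p.2) ∈ B ∧ (p.1, -p.2) ∈ A}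

/-- The sequences `(y n, a n, x n, b n)` (for `n ≥ 1`) are generated by the
Douglas–Rachford method with stepsize `lam` from initial points `x 0`, `b 0`:
`a n ∈ A (y n)`, `lam • a n + y n = x (n-1) - lam • b (n-1)`,
`b n ∈ B (x n)`, `lam • b n + x n = y n + lam • b (n-1)`. -/
def IsDR {X : Type*} [NormedAddCommGroup X] [InnerProductSpace ℝ X]
    (A B : Set (X × X)) (lam : ℝ) (y a x b : ℕ → X) : Prop :=
  ∀ n, 1 ≤ n →
    (y n, a n) ∈ A ∧ lam • a n + y n = x (n - 1) - lam • b (n - 1) ∧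
    (x n, b n) ∈ B ∧ lam • b n + x n = y n + lam • b (n - 1)

open scoped RealInnerProductSpace

section WeakConv

variable {X : Type*} [NormedAddCommGroup X] [InnerProductSpace ℝ X] {u v : ℕ → X} {l m : X}

theorem Filter.Tendsto.weakConv (h : Tendsto u atTop (𝓝 l)) : WeakConv u l :=
  fun _ => h.inner tendsto_const_nhds

theorem WeakConv.comp (h : WeakConv u l) {θ : ℕ → ℕ} (hθ : Tendsto θ atTop atTop) :
    WeakConv (u ∘ θ) l :=
  fun w => (h w).comp hθ

theorem WeakConv.of_comp_add (k : ℕ) (h : WeakConv (fun n => u (n + k)) l) : WeakConv u l :=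
  fun w => (tendsto_add_atTop_iff_nat k).1 (h w)

theorem WeakConv.add (hu : WeakConv u l) (hv : WeakConv v m) :
    WeakConv (fun n => u n + v n) (l + m) :=
  fun w => by simpa only [inner_add_left] using (hu w).add (hv w)

theorem WeakConv.sub (hu : WeakConv u l) (hv : WeakConv v m) :
    WeakConv (fun n => u n - v n) (l - m) :=
  fun w => by simpa only [inner_sub_left] using (hu w).sub (hv w)

theorem WeakConv.const_smul (hu : WeakConv u l) (c : ℝ) : WeakConv (fun n => c • u n) (c • l) :=
  fun w => by simpa only [real_inner_smul_left] using (hu w).const_mul c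

theorem weakConv_of_forall_subseq
    (h : ∀ ns : ℕ → ℕ, Tendsto ns atTop atTop → ∃ ms : ℕ → ℕ, WeakConv (u ∘ ns ∘ ms) l) :
    WeakConv u l :=
  fun w => tendsto_of_subseq_tendsto fun ns hns =>
    let ⟨ms, hms⟩ := h ns hns
    ⟨ms, hms w⟩

theorem exists_weakConv_subseq_of_separableSpace [CompleteSpace X]
    [TopologicalSpace.SeparableSpace X] {C : ℝ} (hu : ∀ n, ‖u n‖ ≤ C) :
    ∃ φ : ℕ → ℕ, StrictMono φ ∧ ∃ l, WeakConv (u ∘ φ) l := by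
  let f : ℕ → WeakDual ℝ X := fun n => StrongDual.toWeakDual (InnerProductSpace.toDual ℝ X (u n))
  have hf : ∀ n, f n ∈ WeakDual.toStrongDual ⁻¹' Metric.closedBall 0 C := fun n => by
    simpa [f] using hu n
  obtain ⟨g, -, φ, hφ, hlim⟩ := WeakDual.isSeqCompact_closedBall ℝ X 0 C hf
  refine ⟨φ, hφ, (InnerProductSpace.toDual ℝ X).symm (WeakDual.toStrongDual g), fun w => ?_⟩
  rw [InnerProductSpace.toDual_symm_apply]
  exact ((WeakDual.eval_continuous w).tendsto g).comp hlim

/-- Reduces to the separable closed span of the sequence through the orthogonal projection. -/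
theorem exists_weakConv_subseq [CompleteSpace X] {C : ℝ} (hu : ∀ n, ‖u n‖ ≤ C) :
    ∃ φ : ℕ → ℕ, StrictMono φ ∧ ∃ l, WeakConv (u ∘ φ) l := by
  set Y := (Submodule.span ℝ (Set.range u)).topologicalClosure
  have hmem : ∀ n, u n ∈ Y :=
    fun n => Submodule.le_topologicalClosure _ (Submodule.subset_span ⟨n, rfl⟩)
  have : TopologicalSpace.SeparableSpace Y :=
    ((Set.countable_range u).isSeparable.span.closure).separableSpace
  obtain ⟨φ, hφ, l, hl⟩ :=
    exists_weakConv_subseq_of_separableSpace (u := fun n => (⟨u n, hmem n⟩ : Y)) hu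
  refine ⟨φ, hφ, l, fun w => ?_⟩
  simpa using hl (Y.orthogonalProjectionOnto w)

theorem exists_weakConv_subseq₂ [CompleteSpace X] {C D : ℝ} (hu : ∀ n, ‖u n‖ ≤ C)
    (hv : ∀ n, ‖v n‖ ≤ D) :
    ∃ φ : ℕ → ℕ, StrictMono φ ∧ ∃ l m, WeakConv (u ∘ φ) l ∧ WeakConv (v ∘ φ) m := by
  obtain ⟨φ, hφ, l, hl⟩ := exists_weakConv_subseq hu
  obtain ⟨ψ, hψ, m, hm⟩ := exists_weakConv_subseq (u := v ∘ φ) fun n => hv (φ n)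
  exact ⟨φ ∘ ψ, hφ.comp hψ, l, m, hl.comp hψ.tendsto_atTop, hm⟩

theorem tendsto_inner_zero_of_bounded {C : ℝ} (hu : ∀ n, ‖u n‖ ≤ C)
    (hv : Tendsto v atTop (𝓝 0)) : Tendsto (fun n => ⟪u n, v n⟫) atTop (𝓝 0) := by
  refine squeeze_zero_norm (fun n => ?_) (by simpa using hv.norm.const_mul C)
  exact (norm_inner_le_norm _ _).trans (mul_le_mul_of_nonneg_right (hu n) (norm_nonneg _))

/-- Opial's argument: if the distances from `s` to `σ` and to `σ'` converge, then
`⟪s n, σ - σ'⟫` converges by polarization, so weak subsequential limits `σ`, `σ'` of `s`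
satisfy `⟪σ - σ', σ - σ'⟫ = 0`. -/
theorem eq_of_weakConv_of_tendsto_norm_sub {s : ℕ → X} {σ σ' : X} {L L' : ℝ}
    (hL : Tendsto (fun n => ‖s n - σ‖) atTop (𝓝 L))
    (hL' : Tendsto (fun n => ‖s n - σ'‖) atTop (𝓝 L')) {θ θ' : ℕ → ℕ}
    (hθ : Tendsto θ atTop atTop) (hθ' : Tendsto θ' atTop atTop)
    (h : WeakConv (s ∘ θ) σ) (h' : WeakConv (s ∘ θ') σ') : σ = σ' := by
  have hpol : Tendsto (fun n => ⟪s n, σ - σ'⟫) atTop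
      (𝓝 ((L' ^ 2 - L ^ 2 + ‖σ‖ ^ 2 - ‖σ'‖ ^ 2) / 2)) := by
    refine ((((hL'.pow 2).sub (hL.pow 2)).add_const _).sub_const _).div_const 2 |>.congr
      fun n => ?_
    rw [norm_sub_sq_real, norm_sub_sq_real, inner_sub_right]
    ring
  have e := tendsto_nhds_unique (h (σ - σ')) (hpol.comp hθ)
  have e' := tendsto_nhds_unique (h' (σ - σ')) (hpol.comp hθ')
  rw [← sub_eq_zero, ← inner_self_eq_zero (𝕜 := ℝ), inner_sub_left, e, e', sub_self]

end WeakConv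

section Fejer

variable {X : Type*} [NormedAddCommGroup X] {s : ℕ → X} {σ : X}

theorem summable_of_succ_add_le {f e : ℕ → ℝ} (hf : ∀ n, 0 ≤ f n) (he : ∀ n, 0 ≤ e n)
    (h : ∀ n, f (n + 1) + e n ≤ f n) : Summable e := by
  have hsum : ∀ N, ∑ n ∈ Finset.range N, e n + f N ≤ f 0 := by
    intro N
    induction N with
    | zero => simp
    | succ N ih => rw [Finset.sum_range_succ]; linarith [h N]
  exact summable_of_sum_range_le he fun N => by linarith [hsum N, hf N]

variable (hs : ∀ n, ‖s (n + 1) - σ‖ ^ 2 + ‖s n - s (n + 1)‖ ^ 2 ≤ ‖s n - σ‖ ^ 2)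
include hs

theorem antitone_norm_sub_of_sq_add_le : Antitone fun n => ‖s n - σ‖ :=
  antitone_nat_of_succ_le fun n => by
    nlinarith [hs n, norm_nonneg (s (n + 1) - σ), norm_nonneg (s n - σ)]

theorem exists_tendsto_norm_sub_of_sq_add_le :
    ∃ L, Tendsto (fun n => ‖s n - σ‖) atTop (𝓝 L) :=
  ⟨_, tendsto_atTop_ciInf (antitone_norm_sub_of_sq_add_le hs)
    ⟨0, Set.forall_mem_range.2 fun _ => norm_nonneg _⟩⟩

theorem tendsto_sub_succ_of_sq_add_le : Tendsto (fun n => s n - s (n + 1)) atTop (𝓝 0) := by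
  have hsq := (summable_of_succ_add_le (f := fun n => ‖s n - σ‖ ^ 2)
    (fun _ => sq_nonneg _) (fun _ => sq_nonneg _) hs).tendsto_atTop_zero.sqrt
  rw [tendsto_zero_iff_norm_tendsto_zero]
  simpa [Real.sqrt_sq (norm_nonneg _)] using hsq

end Fejer

section InnerProduct

variable {X : Type*} [NormedAddCommGroup X] [InnerProductSpace ℝ X]

theorem norm_sub_sq_add_le_of_inner_nonneg {p q r : X} (h : 0 ≤ ⟪p - q, q - r⟫) :
    ‖q - r‖ ^ 2 + ‖p - q‖ ^ 2 ≤ ‖p - r‖ ^ 2 := by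
  rw [← sub_add_sub_cancel p q r, norm_add_sq_real]
  linarith

theorem norm_le_norm_add_of_inner_nonneg {p q : X} (h : 0 ≤ ⟪p, q⟫) : ‖p‖ ≤ ‖p + q‖ :=
  (pow_le_pow_iff_left₀ (norm_nonneg _) (norm_nonneg _) two_ne_zero).1 <| by
    rw [norm_add_sq_real]; nlinarith [sq_nonneg ‖q‖]

theorem inner_smul_add_add_smul (lam : ℝ) (u α β : X) :
    ⟪lam • (α + β), u + lam • β⟫ = lam * (⟪u, α⟫ + ⟪u + lam • (α + β), β⟫) := by
  simp only [inner_add_left, inner_add_right, real_inner_smul_left, real_inner_smul_right,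
    real_inner_comm u]
  ring

end InnerProduct

section Monotone

variable {X : Type*} [NormedAddCommGroup X] [InnerProductSpace ℝ X] {T A B : Set (X × X)}

section Resolvent

variable (hT : IsMonotoneOp T) {x x' b b' : X} (hx : (x, b) ∈ T) (hx' : (x', b') ∈ T)
  {lam : ℝ} (hlam : 0 ≤ lam)
include hT hx hx' hlam

theorem IsMonotoneOp.inner_sub_smul_sub_nonneg : 0 ≤ ⟪x - x', lam • (b - b')⟫ := by
  rw [real_inner_smul_right]
  exact mul_nonneg hlam (hT _ hx _ hx')

theorem IsMonotoneOp.norm_sub_le : ‖x - x'‖ ≤ ‖x + lam • b - (x' + lam • b')‖ := by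
  rw [show x + lam • b - (x' + lam • b') = x - x' + lam • (b - b') by module]
  exact norm_le_norm_add_of_inner_nonneg (hT.inner_sub_smul_sub_nonneg hx hx' hlam)

theorem IsMonotoneOp.norm_smul_sub_le :
    ‖lam • (b - b')‖ ≤ ‖x + lam • b - (x' + lam • b')‖ := by
  rw [show x + lam • b - (x' + lam • b') = lam • (b - b') + (x - x') by module]
  refine norm_le_norm_add_of_inner_nonneg ?_
  rw [real_inner_comm]
  exact hT.inner_sub_smul_sub_nonneg hx hx' hlam

end Resolvent

theorem IsMonotoneOp.eq_of_add_smul_eq (hT : IsMonotoneOp T) {x x' b b' : X} (hx : (x, b) ∈ T)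
    (hx' : (x', b') ∈ T) {lam : ℝ} (hlam : 0 < lam) (h : x + lam • b = x' + lam • b') :
    x = x' ∧ b = b' := by
  have hxx := hT.norm_sub_le hx hx' hlam.le
  have hbb := hT.norm_smul_sub_le hx hx' hlam.le
  rw [h, sub_self, norm_zero, norm_le_zero_iff] at hxx hbb
  exact ⟨sub_eq_zero.1 hxx, sub_eq_zero.1 ((smul_eq_zero.1 hbb).resolve_left hlam.ne')⟩

theorem IsMaxMonotone.mem_of_forall_inner_nonneg (hT : IsMaxMonotone T) {p : X × X}
    (h : ∀ q ∈ T, 0 ≤ ⟪p.1 - q.1, p.2 - q.2⟫) : p ∈ T := by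
  have hmono : IsMonotoneOp (insert p T) := by
    rintro q (hq | hq) r (hr | hr)
    · simp [hq, hr]
    · rw [hq]
      exact h r hr
    · rw [hr, ← neg_sub p.1, ← neg_sub p.2, inner_neg_neg]
      exact h q hq
    · exact hT.1 q hq r hr
  rw [← hT.2 _ hmono (Set.subset_insert p T)]
  exact Set.mem_insert p T

/-- If `⟪z - p, -w - a⟫` were negative for some `(p, a) ∈ A`, the hypothesis would make
`(z, w)` monotonically related to all of `B`, hence a point of `B`, and taking `q = (z, w)`
gives a contradiction. -/
theorem mem_Se_of_forall_inner_add_nonneg (hA : IsMaxMonotone A) (hB : IsMaxMonotone B)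
    {z w : X} (h : ∀ p ∈ A, ∀ q ∈ B, 0 ≤ ⟪z - p.1, -w - p.2⟫ + ⟪z - q.1, w - q.2⟫) :
    (z, w) ∈ Se A B := by
  have hA' : ∀ p ∈ A, 0 ≤ ⟪z - p.1, -w - p.2⟫ := by
    intro p hp
    by_contra! hneg
    have hzB : (z, w) ∈ B :=
      hB.mem_of_forall_inner_nonneg fun q hq => by linarith [h p hp q hq]
    have := h p hp _ hzB
    simp only [sub_self, inner_zero_left, add_zero] at this
    linarith
  have hzA : (z, -w) ∈ A := hA.mem_of_forall_inner_nonneg hA'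
  refine ⟨hB.mem_of_forall_inner_nonneg fun q hq => ?_, hzA⟩
  simpa using h _ hzA q hq

/-- Demiclosedness of the pair `(A, B)`: the coupling `⟪y n, a n⟫ + ⟪x n, b n⟫` tends to `0`,
so the monotonicity inequalities against any `(p, q) ∈ A × B` pass to the weak limit. -/
theorem mem_Se_of_weakConv (hA : IsMaxMonotone A) (hB : IsMaxMonotone B)
    {y a x b : ℕ → X} {z w : X} {C D : ℝ}
    (hyA : ∀ᶠ n in atTop, (y n, a n) ∈ A) (hxB : ∀ᶠ n in atTop, (x n, b n) ∈ B)
    (hx : WeakConv x z) (hb : WeakConv b w) (hxC : ∀ n, ‖x n‖ ≤ C) (hbD : ∀ n, ‖b n‖ ≤ D)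
    (hyx : Tendsto (fun n => y n - x n) atTop (𝓝 0))
    (hab : Tendsto (fun n => a n + b n) atTop (𝓝 0)) :
    (z, w) ∈ Se A B := by
  have hy : WeakConv y z := by simpa using hx.add hyx.weakConv
  have ha : WeakConv a (-w) := by simpa using hab.weakConv.sub hb
  have hcoupling : Tendsto (fun n => ⟪y n, a n⟫ + ⟪x n, b n⟫) atTop (𝓝 0) := by
    have h := ((hyx.inner hab).sub (tendsto_inner_zero_of_bounded hbD hyx)).add
      (tendsto_inner_zero_of_bounded hxC hab)
    rw [inner_zero_left, sub_zero, add_zero] at h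
    refine h.congr fun n => ?_
    simp only [inner_add_right, inner_sub_left, real_inner_comm (b n)]
    ring
  refine mem_Se_of_forall_inner_add_nonneg hA hB fun p hp q hq => ?_
  have hlim : Tendsto (fun n => ⟪y n - p.1, a n - p.2⟫ + ⟪x n - q.1, b n - q.2⟫) atTop
      (𝓝 (⟪z - p.1, -w - p.2⟫ + ⟪z - q.1, w - q.2⟫)) := by
    convert (((((hcoupling.sub (hy p.2)).sub (ha p.1)).sub (hx q.2)).sub (hb q.1)).add_const
      (⟪p.1, p.2⟫ + ⟪q.1, q.2⟫)) using 1
    · funext n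
      simp only [inner_sub_left, inner_sub_right, real_inner_comm p.1, real_inner_comm q.1]
      ring
    · congr 1
      simp only [inner_sub_left, inner_sub_right, inner_neg_right, real_inner_comm p.1,
        real_inner_comm q.1]
      ring
  exact ge_of_tendsto hlim <| (hyA.and hxB).mono fun n hn =>
    add_nonneg (hA.1 _ hn.1 _ hp) (hB.1 _ hn.2 _ hq)

end Monotone

def drIterate {X : Type*} [NormedAddCommGroup X] [InnerProductSpace ℝ X] (lam : ℝ)
    (x b : ℕ → X) (n : ℕ) : X :=
  x n + lam • b n

namespace IsDR

variable {X : Type*} [NormedAddCommGroup X] [InnerProductSpace ℝ X] {A B : Set (X × X)}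
  {lam : ℝ} {y a x b : ℕ → X} (h : IsDR A B lam y a x b)
include h

theorem succ (n : ℕ) :
    (y (n + 1), a (n + 1)) ∈ A ∧ lam • a (n + 1) + y (n + 1) = x n - lam • b n ∧
      (x (n + 1), b (n + 1)) ∈ B ∧ lam • b (n + 1) + x (n + 1) = y (n + 1) + lam • b n := by
  simpa using h (n + 1) (Nat.le_add_left 1 n)

theorem shift :
    IsDR A B lam (fun n => y (n + 1)) (fun n => a (n + 1)) (fun n => x (n + 1))
      (fun n => b (n + 1)) := fun n hn => by
  simpa [Nat.sub_add_cancel hn] using h.succ n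

theorem eventually_mem_A : ∀ᶠ n in atTop, (y n, a n) ∈ A :=
  eventually_atTop.2 ⟨1, fun n hn => (h n hn).1⟩

theorem mem_B (h0 : (x 0, b 0) ∈ B) : ∀ n, (x n, b n) ∈ B
  | 0 => h0
  | n + 1 => (h.succ n).2.2.1

theorem drIterate_sub_succ (n : ℕ) :
    drIterate lam x b n - drIterate lam x b (n + 1) = lam • (a (n + 1) + b n) := by
  obtain ⟨-, h1, -, h2⟩ := h.succ n
  unfold drIterate
  linear_combination (norm := module) -h1 - h2

theorem y_sub_x_succ (n : ℕ) : y (n + 1) - x (n + 1) = lam • (b (n + 1) - b n) := by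
  linear_combination (norm := module) -(h.succ n).2.2.2

section Monotone

variable (h0 : (x 0, b 0) ∈ B) (hA : IsMonotoneOp A) (hB : IsMonotoneOp B) {z w : X}
  (hzw : (z, w) ∈ Se A B)
include h0 hA hB hzw

/-- The cross term `⟪s n - s (n+1), s (n+1) - (z + lam • w)⟫` equals `lam` times the sum of
the monotonicity gaps of `A` at `(y (n+1), a (n+1))` and of `B` at `(x n, b n)`, both taken
against the extended solution `(z, w)`. -/
theorem norm_drIterate_sub_sq_add_le (hlam : 0 ≤ lam) (n : ℕ) :
    ‖drIterate lam x b (n + 1) - (z + lam • w)‖ ^ 2 +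
        ‖drIterate lam x b n - drIterate lam x b (n + 1)‖ ^ 2 ≤
      ‖drIterate lam x b n - (z + lam • w)‖ ^ 2 := by
  obtain ⟨hyA, h1, -, h2⟩ := h.succ n
  have hgapA : 0 ≤ ⟪y (n + 1) - z, a (n + 1) + w⟫ := by
    simpa only [sub_neg_eq_add] using hA _ hyA _ hzw.2
  have hgapB : 0 ≤ ⟪x n - z, b n - w⟫ := hB _ (h.mem_B h0 n) _ hzw.1
  have e1 : drIterate lam x b (n + 1) - (z + lam • w) = y (n + 1) - z + lam • (b n - w) := by
    unfold drIterate
    linear_combination (norm := module) h2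
  have e2 : x n - z = y (n + 1) - z + lam • ((a (n + 1) + w) + (b n - w)) := by
    linear_combination (norm := module) -h1
  refine norm_sub_sq_add_le_of_inner_nonneg ?_
  rw [h.drIterate_sub_succ, e1, show a (n + 1) + b n = (a (n + 1) + w) + (b n - w) by abel,
    inner_smul_add_add_smul, ← e2]
  exact mul_nonneg hlam (add_nonneg hgapA hgapB)

theorem exists_tendsto_norm_drIterate_sub (hlam : 0 ≤ lam) :
    ∃ L, Tendsto (fun n => ‖drIterate lam x b n - (z + lam • w)‖) atTop (𝓝 L) :=
  exists_tendsto_norm_sub_of_sq_add_le (h.norm_drIterate_sub_sq_add_le h0 hA hB hzw hlam)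

theorem tendsto_drIterate_sub_succ (hlam : 0 ≤ lam) :
    Tendsto (fun n => drIterate lam x b n - drIterate lam x b (n + 1)) atTop (𝓝 0) :=
  tendsto_sub_succ_of_sq_add_le (h.norm_drIterate_sub_sq_add_le h0 hA hB hzw hlam)

theorem norm_drIterate_sub_le (hlam : 0 ≤ lam) (n : ℕ) :
    ‖drIterate lam x b n - (z + lam • w)‖ ≤ ‖drIterate lam x b 0 - (z + lam • w)‖ :=
  antitone_norm_sub_of_sq_add_le (h.norm_drIterate_sub_sq_add_le h0 hA hB hzw hlam) n.zero_le

theorem norm_x_le (hlam : 0 ≤ lam) (n : ℕ) :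
    ‖x n‖ ≤ ‖drIterate lam x b 0 - (z + lam • w)‖ + ‖z‖ :=
  (norm_le_norm_sub_add _ _).trans <| add_le_add
    ((hB.norm_sub_le (h.mem_B h0 n) hzw.1 hlam).trans (h.norm_drIterate_sub_le h0 hA hB hzw hlam n))
    le_rfl

theorem norm_b_le (hlam : 0 < lam) (n : ℕ) :
    ‖b n‖ ≤ ‖drIterate lam x b 0 - (z + lam • w)‖ / lam + ‖w‖ := by
  refine (norm_le_norm_sub_add _ _).trans (add_le_add ?_ le_rfl)
  have hle := (hB.norm_smul_sub_le (h.mem_B h0 n) hzw.1 hlam.le).trans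
    (h.norm_drIterate_sub_le h0 hA hB hzw hlam.le n)
  rw [norm_smul, Real.norm_of_nonneg hlam.le] at hle
  rwa [le_div_iff₀' hlam]

theorem tendsto_smul_b_sub_succ (hlam : 0 ≤ lam) :
    Tendsto (fun n => lam • (b (n + 1) - b n)) atTop (𝓝 0) := by
  refine squeeze_zero_norm (fun n => ?_)
    (by simpa using (h.tendsto_drIterate_sub_succ h0 hA hB hzw hlam).norm)
  rw [norm_sub_rev (drIterate lam x b n)]
  exact hB.norm_smul_sub_le (h.mem_B h0 (n + 1)) (h.mem_B h0 n) hlam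

theorem tendsto_y_sub_x (hlam : 0 ≤ lam) : Tendsto (fun n => y n - x n) atTop (𝓝 0) :=
  (tendsto_add_atTop_iff_nat 1).1 <| by
    simpa only [h.y_sub_x_succ] using h.tendsto_smul_b_sub_succ h0 hA hB hzw hlam

theorem tendsto_a_add_b (hlam : 0 < lam) : Tendsto (fun n => a n + b n) atTop (𝓝 0) := by
  rw [← tendsto_const_smul_iff₀ hlam.ne', smul_zero, ← tendsto_add_atTop_iff_nat 1]
  have hsum := (h.tendsto_drIterate_sub_succ h0 hA hB hzw hlam.le).add
    (h.tendsto_smul_b_sub_succ h0 hA hB hzw hlam.le)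
  rw [add_zero] at hsum
  refine hsum.congr fun n => ?_
  rw [h.drIterate_sub_succ]
  module

end Monotone

section MaxMonotone

variable (h0 : (x 0, b 0) ∈ B) (hA : IsMaxMonotone A) (hB : IsMaxMonotone B)
  (hlam : 0 < lam) {z w : X} (hzw : (z, w) ∈ Se A B)
include h0 hA hB hlam hzw

theorem mem_Se_of_weakConv_comp {θ : ℕ → ℕ} (hθ : Tendsto θ atTop atTop) {xc bc : X}
    (hx : WeakConv (x ∘ θ) xc) (hb : WeakConv (b ∘ θ) bc) : (xc, bc) ∈ Se A B :=
  mem_Se_of_weakConv hA hB (hθ.eventually h.eventually_mem_A)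
    (Eventually.of_forall fun n => h.mem_B h0 (θ n)) hx hb
    (fun n => h.norm_x_le h0 hA.1 hB.1 hzw hlam.le (θ n))
    (fun n => h.norm_b_le h0 hA.1 hB.1 hzw hlam (θ n))
    ((h.tendsto_y_sub_x h0 hA.1 hB.1 hzw hlam.le).comp hθ)
    ((h.tendsto_a_add_b h0 hA.1 hB.1 hzw hlam).comp hθ)

theorem eq_of_weakConv_comp {θ θ' : ℕ → ℕ} (hθ : Tendsto θ atTop atTop)
    (hθ' : Tendsto θ' atTop atTop) {xc bc xc' bc' : X} (hx : WeakConv (x ∘ θ) xc)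
    (hb : WeakConv (b ∘ θ) bc) (hx' : WeakConv (x ∘ θ') xc') (hb' : WeakConv (b ∘ θ') bc') :
    xc = xc' ∧ bc = bc' := by
  have hSe := h.mem_Se_of_weakConv_comp h0 hA hB hlam hzw hθ hx hb
  have hSe' := h.mem_Se_of_weakConv_comp h0 hA hB hlam hzw hθ' hx' hb'
  obtain ⟨L, hL⟩ := h.exists_tendsto_norm_drIterate_sub h0 hA.1 hB.1 hSe hlam.le
  obtain ⟨L', hL'⟩ := h.exists_tendsto_norm_drIterate_sub h0 hA.1 hB.1 hSe' hlam.le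
  exact hB.1.eq_of_add_smul_eq hSe.1 hSe'.1 hlam <| eq_of_weakConv_of_tendsto_norm_sub hL hL'
    hθ hθ' (hx.add (hb.const_smul lam)) (hx'.add (hb'.const_smul lam))

variable [CompleteSpace X]

theorem exists_weakConv_x_b :
    ∃ xc bc, (xc, bc) ∈ Se A B ∧ WeakConv x xc ∧ WeakConv b bc := by
  have hcluster : ∀ ns : ℕ → ℕ, Tendsto ns atTop atTop → ∃ ms : ℕ → ℕ,
      Tendsto ms atTop atTop ∧ ∃ xc bc, WeakConv (x ∘ ns ∘ ms) xc ∧ WeakConv (b ∘ ns ∘ ms) bc :=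
    fun ns _ =>
      let ⟨ms, hms, hlim⟩ := exists_weakConv_subseq₂
        (fun n => h.norm_x_le h0 hA.1 hB.1 hzw hlam.le (ns n))
        (fun n => h.norm_b_le h0 hA.1 hB.1 hzw hlam (ns n))
      ⟨ms, hms.tendsto_atTop, hlim⟩
  obtain ⟨ms, hms, xc, bc, hx, hb⟩ := hcluster id tendsto_id
  have hall : ∀ ns : ℕ → ℕ, Tendsto ns atTop atTop →
      ∃ ms : ℕ → ℕ, WeakConv (x ∘ ns ∘ ms) xc ∧ WeakConv (b ∘ ns ∘ ms) bc := by
    intro ns hns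
    obtain ⟨ms', hms', xc', bc', hx', hb'⟩ := hcluster ns hns
    obtain ⟨rfl, rfl⟩ := h.eq_of_weakConv_comp h0 hA hB hlam hzw (hns.comp hms') hms hx' hb' hx hb
    exact ⟨ms', hx', hb'⟩
  exact ⟨xc, bc, h.mem_Se_of_weakConv_comp h0 hA hB hlam hzw hms hx hb,
    weakConv_of_forall_subseq fun ns hns => (hall ns hns).imp fun _ => And.left,
    weakConv_of_forall_subseq fun ns hns => (hall ns hns).imp fun _ => And.right⟩

theorem exists_weakConv_y_neg_a :
    ∃ zs ws, (zs, ws) ∈ Se A B ∧ WeakConv y zs ∧ WeakConv (fun n => -a n) ws := by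
  obtain ⟨xc, bc, hSe, hx, hb⟩ := h.exists_weakConv_x_b h0 hA hB hlam hzw
  refine ⟨xc, bc, hSe, ?_, ?_⟩
  · simpa using hx.add (h.tendsto_y_sub_x h0 hA.1 hB.1 hzw hlam.le).weakConv
  · simpa using hb.sub (h.tendsto_a_add_b h0 hA.1 hB.1 hzw hlam).weakConv

end MaxMonotone

end IsDR

/-- Main theorem, second part: `(y_n, -a_n)` converges weakly to a point of `S_e(A,B)`. -/
theorem dr_weak_convergence_ya {X : Type*} [NormedAddCommGroup X] [InnerProductSpace ℝ X]
    [CompleteSpace X] (A B : Set (X × X))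
    (hA : IsMaxMonotone A) (hB : IsMaxMonotone B)
    (lam : ℝ) (hlam : 0 < lam) (y a x b : ℕ → X) (hDR : IsDR A B lam y a x b)
    (hsol : ∃ z u v : X, (z, u) ∈ A ∧ (z, v) ∈ B ∧ u + v = 0) :
    ∃ zstar wstar : X, (zstar, wstar) ∈ Se A B ∧
      WeakConv y zstar ∧ WeakConv (fun n => -a n) wstar := by
  obtain ⟨z, u, w, hzu, hzw, huw⟩ := hsol
  rw [add_eq_zero_iff_eq_neg] at huw
  subst huw
  obtain ⟨zs, ws, hSe, hy, ha⟩ :=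
    hDR.shift.exists_weakConv_y_neg_a (hDR.succ 0).2.2.1 hA hB hlam (z := z) ⟨hzw, hzu⟩
  exact ⟨zs, ws, hSe, hy.of_comp_add 1, ha.of_comp_add 1⟩
end

section
/- Let A, B be maximal monotone operators on a real Hilbert space X and let (y_n, a_n, x_n, b_n) be sequences generated by the Douglas–Rachford method with stepsize λ = 1 from initial points x₀, b₀ ∈ X. If S_e(A,B) is nonempty, then Σ_{n=1}^{∞} ‖a_n + b_{n−1}‖² < ∞; in particular a_n + b_{n−1} = x_{n−1} − y_n → 0 strongly as n → ∞. -/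
open Filter Topology

/-!
For `(z, w) ∈ S_e(A,B)` the DR step satisfies the exact identity
`‖x_n - z‖² + ‖b_n - w‖² = ‖x_{n+1} - z‖² + ‖b_{n+1} - w‖² + ‖a_{n+1} + b_n‖²`
`  + 2⟪y_{n+1} - z, a_{n+1} + w⟫ + 2⟪x_{n+1} - z, b_{n+1} - w⟫`,
whose last two terms are nonnegative by monotonicity of `A` and `B`. Hence the energy
`‖x_n - z‖² + ‖b_n - w‖²` decreases by at least `‖a_{n+1} + b_n‖²` per step, and these squared
residuals telescope to a sum bounded by the initial energy.
-/

lemma summable_of_add_le_of_nonneg {f φ : ℕ → ℝ} (hf : ∀ n, 0 ≤ f n) (hφ : ∀ n, 0 ≤ φ n)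
    (h : ∀ n, φ (n + 1) + f n ≤ φ n) : Summable f := by
  refine summable_of_sum_range_le (c := φ 0) hf fun N => ?_
  calc ∑ i ∈ Finset.range N, f i
      ≤ ∑ i ∈ Finset.range N, (φ i - φ (i + 1)) :=
        Finset.sum_le_sum fun i _ => by linarith [h i]
    _ = φ 0 - φ N := Finset.sum_range_sub' φ N
    _ ≤ φ 0 := by linarith [hφ N]

lemma tendsto_zero_of_summable_norm_sq {E : Type*} [SeminormedAddCommGroup E] {u : ℕ → E}
    (h : Summable fun n => ‖u n‖ ^ 2) : Tendsto u atTop (𝓝 0) := by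
  rw [tendsto_zero_iff_norm_tendsto_zero]
  simpa using h.tendsto_atTop_zero.sqrt

section

variable {X : Type*} [NormedAddCommGroup X] [InnerProductSpace ℝ X]

lemma norm_add_add_add_sq_add (p q r s : X) :
    ‖p + q + r + s‖ ^ 2 + ‖r + s‖ ^ 2 =
      ‖p + s‖ ^ 2 + ‖r‖ ^ 2 + ‖q + r + s‖ ^ 2 + 2 * inner ℝ p q + 2 * inner ℝ (p + s) r := by
  simp only [← real_inner_self_eq_norm_sq, inner_add_left, inner_add_right]
  linarith [real_inner_comm p q, real_inner_comm p r, real_inner_comm p s,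
    real_inner_comm q r, real_inner_comm q s, real_inner_comm r s]

lemma dr_step_norm_sq_eq {x' b' y a x b : X} (z w : X)
    (ha : a + y = x' - b') (hb : b + x = y + b') :
    ‖x' - z‖ ^ 2 + ‖b' - w‖ ^ 2 = ‖x - z‖ ^ 2 + ‖b - w‖ ^ 2 + ‖a + b'‖ ^ 2
      + 2 * inner ℝ (y - z) (a + w) + 2 * inner ℝ (x - z) (b - w) := by
  obtain rfl : x' = a + y + b' := by linear_combination (norm := module) -ha
  obtain rfl : x = y + b' - b := by linear_combination (norm := module) hb
  convert norm_add_add_add_sq_add (y - z) (a + w) (b - w) (b' - b) using 3 <;> abel_nf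

namespace IsDR

variable {A B : Set (X × X)} {y a x b : ℕ → X}

lemma add_eq_sub (hDR : IsDR A B 1 y a x b) {n : ℕ} (hn : 1 ≤ n) :
    a n + b (n - 1) = x (n - 1) - y n := by
  have ha := (hDR n hn).2.1
  rw [one_smul, one_smul] at ha
  linear_combination (norm := module) ha

lemma norm_sq_add_le (hA : IsMonotoneOp A) (hB : IsMonotoneOp B) (hDR : IsDR A B 1 y a x b)
    {p : X × X} (hp : p ∈ Se A B) (n : ℕ) :
    ‖x (n + 1) - p.1‖ ^ 2 + ‖b (n + 1) - p.2‖ ^ 2 + ‖a (n + 1) + b n‖ ^ 2 ≤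
      ‖x n - p.1‖ ^ 2 + ‖b n - p.2‖ ^ 2 := by
  obtain ⟨hyA, ha, hxB, hb⟩ := hDR (n + 1) n.succ_pos
  simp only [one_smul, Nat.add_sub_cancel] at ha hb
  have hA_inner : 0 ≤ inner ℝ (y (n + 1) - p.1) (a (n + 1) + p.2) := by
    simpa using hA _ hyA _ hp.2
  have hB_inner : 0 ≤ inner ℝ (x (n + 1) - p.1) (b (n + 1) - p.2) := hB _ hxB _ hp.1
  rw [dr_step_norm_sq_eq p.1 p.2 ha hb]
  linarith

end IsDR

end

theorem dr_summable_general {X : Type*} [NormedAddCommGroup X] [InnerProductSpace ℝ X]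
    (A B : Set (X × X))
    (hA : IsMaxMonotone A) (hB : IsMaxMonotone B)
    (y a x b : ℕ → X) (hDR : IsDR A B 1 y a x b)
    (hne : (Se A B).Nonempty) :
    Summable (fun n : ℕ => ‖a (n + 1) + b n‖ ^ 2) ∧
    (∀ n, 1 ≤ n → a n + b (n - 1) = x (n - 1) - y n) ∧
    Tendsto (fun n : ℕ => a (n + 1) + b n) atTop (𝓝 0) := by
  obtain ⟨p, hp⟩ := hne
  have hsum : Summable fun n => ‖a (n + 1) + b n‖ ^ 2 :=
    summable_of_add_le_of_nonneg (φ := fun n => ‖x n - p.1‖ ^ 2 + ‖b n - p.2‖ ^ 2)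
      (fun _ => by positivity) (fun _ => by positivity)
      fun n => by linarith [hDR.norm_sq_add_le hA.1 hB.1 hp n]
  exact ⟨hsum, fun _ => hDR.add_eq_sub, tendsto_zero_of_summable_norm_sq hsum⟩

/-- If `S_e(A,B) ≠ ∅` then `∑ ‖a_n + b_{n-1}‖² < ∞`; in particular
`a_n + b_{n-1} = x_{n-1} - y_n → 0` strongly. -/
theorem dr_summable {X : Type*} [NormedAddCommGroup X] [InnerProductSpace ℝ X]
    [CompleteSpace X] (A B : Set (X × X))
    (hA : IsMaxMonotone A) (hB : IsMaxMonotone B)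
    (y a x b : ℕ → X) (hDR : IsDR A B 1 y a x b)
    (hne : (Se A B).Nonempty) :
    Summable (fun n : ℕ => ‖a (n + 1) + b n‖ ^ 2) ∧
    (∀ n, 1 ≤ n → a n + b (n - 1) = x (n - 1) - y n) ∧
    Tendsto (fun n : ℕ => a (n + 1) + b n) atTop (𝓝 0) :=
  dr_summable_general A B hA hB y a x b hDR hne
end
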